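/- arXiv:2204.04543 — 6 statements merged into one kernel-verified Lean document; each statement's English description precedes it below -/
import Mathlib

section
/- Let u be a nontrivial element of a free group F that is not a proper power. If there exist w ∈ F and integers p, q with w⁻¹ u^p w = u^q and p ≠ 0, then p = q and w lies in the cyclic subgroup generated by u. -/
/-!
Subgroups of free groups are free (Nielsen–Schreier), and two distinct generators of a free group
never commute, so a commutative free group is cyclic and commuting elements of a free group are
powers of a common element. Since a generator `of a` is not a proper power (look at the exponent
sum of `a`), its centralizer is `⟨of a⟩`; hence a free group with a nontrivial central element has
at most one generator. Applied to the centralizer of `g ≠ 1`, this shows that centralizers of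
nontrivial elements are cyclic, and equal to `⟨u⟩` when they contain `u`.

For the theorem, `w u w⁻¹` commutes with `u ^ p = w u ^ q w⁻¹ ≠ 1`, so `w u w⁻¹ = u ^ k`, and
`u = (w⁻¹ u w) ^ k` forces `k = ±1`. Then `w ^ 2` commutes with `u`, so `w` lies in the
centralizer of `w ^ 2`, which is `⟨u⟩` unless `w = 1`. Finally `w` commutes with `u ^ p`, so
`u ^ p = u ^ q` and `p = q` by torsion-freeness.
-/

open Subgroup

theorem zpowers_eq_zpowers_of_mem {G : Type*} [Group G] {u z : G}
    (hu : ∀ (v : G) (n : ℤ), u = v ^ n → n = 1 ∨ n = -1) (h : u ∈ zpowers z) :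
    zpowers z = zpowers u := by
  obtain ⟨m, rfl⟩ := h
  rcases hu z m rfl with rfl | rfl
  · simp
  · simp [zpowers_inv]

theorem commute_sq_of_conj_eq_zpow {G : Type*} [Group G] {u w : G} {k : ℤ}
    (hk : k = 1 ∨ k = -1) (h : w * u * w⁻¹ = u ^ k) : Commute (w ^ 2) u := by
  have : w ^ 2 * u * (w ^ 2)⁻¹ = u ^ (k * k) := calc
    _ = w * (w * u * w⁻¹) * w⁻¹ := by rw [sq]; group
    _ = (w * u * w⁻¹) ^ k := by rw [conj_zpow, h]
    _ = u ^ (k * k) := by rw [h, zpow_mul]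
  rcases hk with rfl | rfl <;> simpa [commute_iff_eq, mul_inv_eq_iff_eq_mul] using this

namespace FreeGroup

variable {X : Type*}

theorem not_commute_of_ne {a b : X} (hab : a ≠ b) : ¬Commute (of a) (of b) := by
  classical
  intro h
  have := congrArg (lift fun c => if c = a then Equiv.swap (0 : Fin 3) 1 else Equiv.swap 1 2) h.eq
  simp only [_root_.map_mul, lift_apply_of, ↓reduceIte, hab.symm] at this
  revert this
  decide

theorem isCyclic_of_subsingleton [Subsingleton X] : IsCyclic (FreeGroup X) := by
  cases isEmpty_or_nonempty X
  · infer_instance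
  · have := uniqueOfSubsingleton (Classical.arbitrary X)
    infer_instance

def expSum [DecidableEq X] (a : X) : FreeGroup X →* Multiplicative ℤ :=
  lift (Pi.mulSingle a (Multiplicative.ofAdd 1) : X → Multiplicative ℤ)

@[simp]
theorem expSum_of [DecidableEq X] (a b : X) :
    expSum a (of b) = (Pi.mulSingle a (Multiplicative.ofAdd 1) : X → Multiplicative ℤ) b :=
  lift_apply_of

theorem eq_one_or_neg_one_of_of_eq_zpow {a : X} {v : FreeGroup X} {n : ℤ} (h : of a = v ^ n) :
    n = 1 ∨ n = -1 := by
  classical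
  have := congrArg (fun g => (expSum a g).toAdd) h
  simp only [expSum_of, Pi.mulSingle_eq_same, map_zpow, toAdd_zpow, smul_eq_mul] at this
  exact Int.eq_one_or_neg_one_of_mul_eq_one this.symm

end FreeGroup

namespace IsFreeGroup

variable {G : Type*} [Group G] [IsFreeGroup G]

theorem isCyclic_of_isMulCommutative [IsMulCommutative G] : IsCyclic G := by
  have : Subsingleton (Generators G) := ⟨fun a b => by_contra fun hab =>
    FreeGroup.not_commute_of_ne hab <| by
      simpa using Commute.map (mul_comm' ((toFreeGroup G).symm (.of a))
        ((toFreeGroup G).symm (.of b))) (toFreeGroup G)⟩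
  exact (toFreeGroup G).isCyclic.2 FreeGroup.isCyclic_of_subsingleton

theorem exists_mem_zpowers_of_commute {x y : G} (h : Commute x y) :
    ∃ z, x ∈ zpowers z ∧ y ∈ zpowers z := by
  have : IsMulCommutative (closure {x, y}) := isMulCommutative_closure <| by
    rintro a (rfl | rfl) b (rfl | rfl)
    exacts [rfl, h, h.symm, rfl]
  obtain ⟨z, hz⟩ := (closure {x, y}).isCyclic_iff_exists_zpowers_eq_top.1
    isCyclic_of_isMulCommutative
  exact ⟨z, hz ▸ subset_closure (by simp), hz ▸ subset_closure (by simp)⟩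

end IsFreeGroup

namespace FreeGroup

variable {X : Type*}

theorem mem_zpowers_of_commute_of {g : FreeGroup X} {a : X} (h : Commute g (of a)) :
    g ∈ zpowers (of a) := by
  obtain ⟨z, hg, ha⟩ := IsFreeGroup.exists_mem_zpowers_of_commute h
  rwa [← zpowers_eq_zpowers_of_mem (fun _ _ => eq_one_or_neg_one_of_of_eq_zpow) ha]

theorem subsingleton_of_mem_center {g : FreeGroup X} (hg : g ∈ center (FreeGroup X))
    (hg1 : g ≠ 1) : Subsingleton X := by
  classical
  refine ⟨fun a b => by_contra fun hab => hg1 ?_⟩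
  obtain ⟨s, rfl⟩ := mem_zpowers_of_commute_of (mem_center_iff.1 hg (of a)).symm
  obtain ⟨t, ht⟩ := mem_zpowers_of_commute_of (mem_center_iff.1 hg (of b)).symm
  have hs : 0 = s := by
    simpa [Pi.mulSingle_eq_of_ne (Ne.symm hab)] using congrArg (fun g => (expSum a g).toAdd) ht
  simp [← hs]

end FreeGroup

namespace IsFreeGroup

variable {G : Type*} [Group G] [IsFreeGroup G]

theorem isCyclic_of_mem_center {g : G} (hg : g ∈ center G) (hg1 : g ≠ 1) : IsCyclic G := by
  have : Subsingleton (Generators G) := FreeGroup.subsingleton_of_mem_center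
    (MulEquivClass.apply_mem_center (toFreeGroup G) hg) (by simpa using hg1)
  exact (toFreeGroup G).isCyclic.2 FreeGroup.isCyclic_of_subsingleton

theorem isCyclic_centralizer {g : G} (hg : g ≠ 1) : IsCyclic (centralizer {g}) :=
  isCyclic_of_mem_center (g := ⟨g, mem_centralizer_singleton_iff.2 rfl⟩)
    (mem_center_iff.2 fun h => Subtype.ext (mem_centralizer_singleton_iff.1 h.2))
    (by simpa using hg)

theorem mem_zpowers_of_commute {u g x : G}
    (hu : ∀ (v : G) (n : ℤ), u = v ^ n → n = 1 ∨ n = -1) (hg : g ≠ 1)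
    (hug : Commute u g) (hxg : Commute x g) : x ∈ zpowers u := by
  obtain ⟨z, hz⟩ :=
    (centralizer {g}).isCyclic_iff_exists_zpowers_eq_top.1 (isCyclic_centralizer hg)
  rw [← zpowers_eq_zpowers_of_mem hu (hz ▸ mem_centralizer_singleton_iff.2 hug.eq), hz]
  exact mem_centralizer_singleton_iff.2 hxg.eq

end IsFreeGroup

/-- If u is a nontrivial non proper power in a free group and w⁻¹ u^p w = u^q with p ≠ 0,
then p = q and w ∈ ⟨u⟩. -/
theorem conj_pow_eq_pow_free {α : Type*} (u : FreeGroup α) (hu : u ≠ 1)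
    (hnp : ∀ (v : FreeGroup α) (n : ℤ), u = v ^ n → n = 1 ∨ n = -1)
    (w : FreeGroup α) (p q : ℤ) (hp : p ≠ 0)
    (h : w⁻¹ * u ^ p * w = u ^ q) :
    p = q ∧ w ∈ Subgroup.zpowers u := by
  have hup : u ^ p ≠ 1 := (IsMulTorsionFree.zpow_eq_one_iff_right hu).not.2 hp
  obtain ⟨k, hk : u ^ k = w * u * w⁻¹⟩ : w * u * w⁻¹ ∈ zpowers u := by
    refine IsFreeGroup.mem_zpowers_of_commute hnp hup ((Commute.refl u).zpow_right p) ?_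
    rw [show u ^ p = w * u ^ q * w⁻¹ by rw [← h]; group]
    exact (Commute.conj_iff w).2 ((Commute.refl u).zpow_right q)
  have hk1 : k = 1 ∨ k = -1 := hnp (w⁻¹ * u * w) k <| by
    have := conj_zpow (a := w⁻¹) (b := u) (i := k)
    rw [inv_inv] at this
    rw [this, hk]; group
  have hw : w ∈ zpowers u := by
    obtain rfl | hw1 := eq_or_ne w 1
    · exact one_mem _
    exact IsFreeGroup.mem_zpowers_of_commute hnp (sq_eq_one.not.2 hw1)
      (commute_sq_of_conj_eq_zpow hk1 hk.symm).symm (Commute.self_pow w 2)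
  have hwp : Commute w (u ^ p) := by
    obtain ⟨s, rfl⟩ := hw
    exact Commute.zpow_zpow_self u s p
  have hpq : u ^ p = u ^ q := by rw [← h, mul_assoc, ← hwp.eq, inv_mul_cancel_left]
  refine ⟨sub_eq_zero.1 <| (IsMulTorsionFree.zpow_eq_one_iff_right hu).1 ?_, hw⟩
  rw [zpow_sub, hpq, mul_inv_cancel]
end

section
/- Let G be a finitely generated group, n a natural number, and N the intersection of all normal subgroups of G of index at most n. Then N is a fully invariant subgroup of G of finite index. -/
/-!
A subgroup of index at most `n` is a point stabilizer for an action of `G` on `Fin n`, so it is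
determined by a homomorphism `G →* Equiv.Perm (Fin n)` and a point; a finitely generated group has
only finitely many such homomorphisms, so `N` is a finite intersection of finite-index subgroups.
`N` is fully invariant because the preimage of a normal subgroup of index `k` under an
endomorphism is normal of index dividing `k`.
-/

open Subgroup

lemma MonoidHom.finite_of_fg {M P : Type*} [Monoid M] [Monoid.FG M] [Monoid P] [Finite P] :
    Finite (M →* P) := by
  obtain ⟨S, hS, hSfin⟩ := Monoid.fg_iff.mp ‹Monoid.FG M›
  have : Finite S := hSfin.to_subtype
  refine Finite.of_injective (fun f : M →* P => fun s : S => f s) fun f g hfg => ?_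
  exact MonoidHom.eq_of_eqOn_denseM hS fun x hx => congrFun hfg ⟨x, hx⟩

namespace Subgroup

variable {G : Type*} [Group G]

/-- `G` permutes the cosets of `H`, which embed into `Fin n`; `H` is the stabilizer of the
trivial coset. -/
lemma exists_eq_comap_stabilizer_of_index_le {H : Subgroup G} {n : ℕ} (h0 : H.index ≠ 0)
    (hle : H.index ≤ n) :
    ∃ (ρ : G →* Equiv.Perm (Fin n)) (x : Fin n),
      (MulAction.stabilizer (Equiv.Perm (Fin n)) x).comap ρ = H := by
  have : H.FiniteIndex := ⟨h0⟩
  let e : G ⧸ H ↪ Fin n := (Finite.equivFin _).toEmbedding.trans (Fin.castLEEmb hle)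
  refine ⟨(Equiv.Perm.viaEmbeddingHom e).comp (MulAction.toPermHom G (G ⧸ H)), e (1 : G), ?_⟩
  ext g
  have hact : (Equiv.Perm.viaEmbeddingHom e (MulAction.toPermHom G (G ⧸ H) g)) (e (1 : G)) =
      e (g • ((1 : G) : G ⧸ H)) :=
    Equiv.Perm.viaEmbedding_apply _ _ _
  simp only [mem_comap, MonoidHom.comp_apply, MulAction.mem_stabilizer_iff, Equiv.Perm.smul_def,
    hact, e.injective.eq_iff]
  rw [← MulAction.mem_stabilizer_iff, MulAction.stabilizer_quotient]

lemma finite_setOf_index_ne_zero_and_le [Group.FG G] (n : ℕ) :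
    {H : Subgroup G | H.index ≠ 0 ∧ H.index ≤ n}.Finite := by
  have : Finite (G →* Equiv.Perm (Fin n)) := MonoidHom.finite_of_fg
  refine (Set.finite_range fun p : (G →* Equiv.Perm (Fin n)) × Fin n =>
    (MulAction.stabilizer (Equiv.Perm (Fin n)) p.2).comap p.1).subset ?_
  rintro H ⟨h0, hle⟩
  obtain ⟨ρ, x, hH⟩ := exists_eq_comap_stabilizer_of_index_le h0 hle
  exact ⟨(ρ, x), hH⟩

lemma Normal.index_comap_dvd {G' : Type*} [Group G'] {H : Subgroup G} (hH : H.Normal)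
    (f : G' →* G) : (H.comap f).index ∣ H.index := by
  rw [index_comap]
  exact relIndex_dvd_index_of_normal H _

lemma map_biInf_le_of_comap_mem {S : Set (Subgroup G)} (φ : G →* G)
    (hS : ∀ H ∈ S, H.comap φ ∈ S) : (⨅ H ∈ S, H).map φ ≤ ⨅ H ∈ S, H :=
  le_iInf₂ fun H hH => map_le_iff_le_comap.mpr (iInf₂_le _ (hS H hH))

lemma finiteIndex_biInf {S : Set (Subgroup G)} (hS : S.Finite) (h : ∀ H ∈ S, H.FiniteIndex) :
    (⨅ H ∈ S, H).FiniteIndex := by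
  have : Finite S := hS.to_subtype
  rw [iInf_subtype']
  exact finiteIndex_iInf fun H => h H H.2

end Subgroup

/-- The intersection of all normal subgroups of index at most n of a finitely generated
group is a fully invariant subgroup of finite index. -/
theorem inf_normal_le_index_fully_invariant {G : Type*} [Group G] [Group.FG G]
    (n : ℕ) (N : Subgroup G)
    (hN : N = ⨅ H ∈ {H : Subgroup G | H.Normal ∧ H.index ≠ 0 ∧ H.index ≤ n}, H) :
    (∀ φ : Monoid.End G, N.map φ ≤ N) ∧ N.FiniteIndex := by
  subst hN
  refine ⟨fun φ => map_biInf_le_of_comap_mem φ ?_, finiteIndex_biInf ?_ fun H hH => ⟨hH.2.1⟩⟩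
  · rintro H ⟨hnorm, h0, hle⟩
    have hdvd := hnorm.index_comap_dvd φ
    exact ⟨hnorm.comap φ, fun h => h0 (Nat.eq_zero_of_zero_dvd (h ▸ hdvd)),
      (Nat.le_of_dvd (Nat.pos_of_ne_zero h0) hdvd).trans hle⟩
  · exact (finite_setOf_index_ne_zero_and_le n).subset fun H hH => hH.2
end

section
/- Let F be a free group of finite rank, φ a noninjective endomorphism of F, and H a subgroup of F. If the preimage H·φ⁻¹ is finitely generated, then H·φ⁻¹ has finite index in F. -/
/-!
`P = H·φ⁻¹` contains the normal subgroup `Ker φ ≠ 1`. Let `N` bound the lengths of a finite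
generating set of `P`. Reading the reduced word of an element of `P` as a product of generators
shows that each of its prefixes `q` satisfies `P q = P t` for some `t` of length at most `N`.
In rank at least two every `g` is such a prefix: for `1 ≠ k ∈ Ker φ` and a letter `x` chosen to
avoid three cancellations, the reduced word of `g x k x⁻¹ g⁻¹ ∈ P` is `g · x k x⁻¹ · g⁻¹`. So the
finitely many words of length at most `N` represent all cosets of `P`. In rank one, `P` is a
nontrivial subgroup of `ℤ`.
-/

theorem Int.index_ne_zero_of_ne_bot {H : AddSubgroup ℤ} (hH : H ≠ ⊥) : H.index ≠ 0 := by
  obtain ⟨a, rfl⟩ := Int.subgroup_cyclic H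
  rw [← AddSubgroup.zmultiples_eq_closure, Int.index_zmultiples, Int.natAbs_ne_zero]
  rintro rfl
  exact hH (by simp)

namespace FreeGroup

variable {α : Type*}

theorem exists_letter_ne [Nontrivial α] (u v w : α × Bool) :
    ∃ x, x ≠ u ∧ x ≠ v ∧ x ≠ w := by
  classical
  obtain ⟨a, b, hab⟩ := exists_pair_ne α
  obtain ⟨x, -, hx⟩ := Finset.exists_mem_notMem_of_card_lt_card (s := {u, v, w})
    (t := {(a, true), (a, false), (b, true), (b, false)})
    (Finset.card_le_three.trans_lt (by simp [hab]))
  simp only [Finset.mem_insert, Finset.mem_singleton, not_or] at hx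
  exact ⟨x, hx⟩

theorem letter_rel_iff_ne (a b : α × Bool) : (a.1 = b.1 → a.2 = b.2) ↔ b ≠ (a.1, !a.2) := by
  obtain ⟨a, _ | _⟩ := a <;> obtain ⟨b, _ | _⟩ := b <;> simp [eq_comm]

section DecidableEq

variable [DecidableEq α]

theorem IsReduced.exists_reduce_append {L₁ L₂ : List (α × Bool)} (h₁ : IsReduced L₁)
    (h₂ : IsReduced L₂) :
    ∃ A c B, L₁ = A ++ c ∧ L₂ = invRev c ++ B ∧ reduce (L₁ ++ L₂) = A ++ B := by
  induction L₁ with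
  | nil => exact ⟨[], [], L₂, rfl, by simp, h₂.reduce_eq⟩
  | cons x L₁ ih =>
    obtain ⟨A, c, B, rfl, rfl, hred⟩ := ih (List.IsChain.tail h₁)
    have hAB : IsReduced (A ++ B) := hred ▸ IsReduced.of_reduce_eq reduce.idem
    rw [List.cons_append, ← reduce_cons_reduce, hred]
    rcases A with _ | ⟨y, A⟩
    · rcases B with _ | ⟨y, B⟩
      · exact ⟨[x], c, [], rfl, by simp, rfl⟩
      · simp only [List.nil_append] at hAB ⊢
        rw [reduce.cons, hAB.reduce_eq]
        by_cases hxy : x.1 = y.1 ∧ x.2 = !y.2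
        · refine ⟨[], x :: c, B, rfl, ?_, by simp [hxy]⟩
          obtain ⟨x1, x2⟩ := x
          obtain ⟨y1, y2⟩ := y
          obtain ⟨rfl, rfl⟩ : x1 = y1 ∧ x2 = !y2 := hxy
          simp [invRev]
        · exact ⟨[x], c, y :: B, rfl, rfl, by simp [hxy]⟩
    · exact ⟨x :: y :: A, c, B, rfl, rfl,
        (isReduced_cons_cons.mpr ⟨(isReduced_cons_cons.mp h₁).1, hAB⟩).reduce_eq⟩

theorem toWord_mul_eq_append {x y : FreeGroup α}
    (h : ∀ a ∈ x.toWord.getLast?, ∀ b ∈ y.toWord.head?, a.1 = b.1 → a.2 = b.2) :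
    (x * y).toWord = x.toWord ++ y.toWord := by
  rw [toWord_mul]
  exact IsReduced.reduce_eq (List.IsChain.append isReduced_toWord isReduced_toWord h)

theorem exists_norm_le_mk_mul_inv_mem_of_prefix_mul {P : Subgroup (FreeGroup α)} {N : ℕ}
    {x v : FreeGroup α} (hx : x ∈ P) (hv : norm v ≤ N)
    (ih : ∀ q, q <+: x.toWord → ∃ t, norm t ≤ N ∧ mk q * t⁻¹ ∈ P) :
    ∀ q, q <+: (x * v).toWord → ∃ t, norm t ≤ N ∧ mk q * t⁻¹ ∈ P := by
  rintro q ⟨r, hqr⟩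
  obtain ⟨A, c, B, hx', hv', hxv⟩ :=
    isReduced_toWord.exists_reduce_append (isReduced_toWord (x := v))
  rw [← toWord_mul] at hxv
  rcases List.append_eq_append_iff.mp (hqr.trans hxv) with ⟨A', rfl, -⟩ | ⟨c', rfl, hB⟩
  · exact ih q ⟨A' ++ c, by rw [hx', List.append_assoc]⟩
  · -- `q` ends inside `v = c⁻¹ B`; its part `c⁻¹ c'` there is the short representative.
    refine ⟨mk (invRev c ++ c'), ?_, ?_⟩
    · calc norm (mk (invRev c ++ c')) ≤ (invRev c ++ c').length := norm_mk_le
        _ ≤ v.toWord.length := by simp [hv', hB]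
        _ ≤ N := hv
    · have hmk : mk (A ++ c') * (mk (invRev c ++ c'))⁻¹ = mk (A ++ c) := by
        rw [← mul_mk, ← mul_mk, ← mul_mk, ← inv_mk]
        group
      rw [hmk, ← hx', mk_toWord]
      exact hx

theorem exists_norm_le_mk_mul_inv_mem_closure {S : Set (FreeGroup α)} {N : ℕ}
    (hS : ∀ s ∈ S, norm s ≤ N) {w : FreeGroup α} (hw : w ∈ Subgroup.closure S) :
    ∀ q, q <+: w.toWord → ∃ t, norm t ≤ N ∧ mk q * t⁻¹ ∈ Subgroup.closure S := by
  induction hw using Subgroup.closure_induction_right with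
  | one =>
    intro q hq
    rw [toWord_one, List.prefix_nil] at hq
    exact ⟨1, by simp, by simp [hq, ← one_eq_mk]⟩
  | mul_right x hx y hy ih =>
    exact exists_norm_le_mk_mul_inv_mem_of_prefix_mul hx (hS y hy) ih
  | mul_inv_cancel x hx y hy ih =>
    exact exists_norm_le_mk_mul_inv_mem_of_prefix_mul hx (norm_inv_eq (x := y) ▸ hS y hy) ih

theorem toWord_letter_conj_eq {k : FreeGroup α} (hk : k.toWord ≠ []) {x : α × Bool}
    (hx_head : x.1 = (k.toWord.head hk).1 → x.2 = (k.toWord.head hk).2)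
    (hx_last : (k.toWord.getLast hk).1 = x.1 → (k.toWord.getLast hk).2 = !x.2) :
    (mk [x] * k * mk [(x.1, !x.2)]).toWord = x :: k.toWord ++ [(x.1, !x.2)] := by
  have hxk : (mk [x] * k).toWord = x :: k.toWord :=
    toWord_mul_eq_append (by simpa [List.head?_eq_some_head hk] using hx_head)
  have hlast : (x :: k.toWord).getLast? = some (k.toWord.getLast hk) := by
    rw [List.getLast?_cons, List.getLast?_eq_some_getLast hk]; rfl
  exact (toWord_mul_eq_append (by simpa [hxk, hlast] using hx_last)).trans (by rw [hxk]; rfl)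

theorem toWord_conj_eq_append {g κ : FreeGroup α} {x : α × Bool} {L : List (α × Bool)}
    (hκ : κ.toWord = x :: L ++ [(x.1, !x.2)])
    (hgx : ∀ a ∈ g.toWord.getLast?, a.1 = x.1 → a.2 = x.2) :
    (g * κ * g⁻¹).toWord = g.toWord ++ κ.toWord ++ g⁻¹.toWord := by
  have hgκ : (g * κ).toWord = g.toWord ++ κ.toWord :=
    toWord_mul_eq_append (by rw [hκ]; rintro a ha b ⟨⟩; exact hgx a ha)
  refine (toWord_mul_eq_append ?_).trans (by rw [hgκ])
  rw [hgκ, hκ, toWord_inv, ← List.append_assoc, List.getLast?_concat]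
  rintro _ ⟨⟩ b hb
  simp only [invRev, List.head?_reverse, List.getLast?_map, Option.mem_map] at hb
  obtain ⟨a, ha, rfl⟩ := hb
  intro h
  simp [hgx a ha h.symm]

theorem exists_toWord_conj_eq_append [Nontrivial α] (g : FreeGroup α) {k : FreeGroup α}
    (hk : k ≠ 1) : ∃ h r, (h * k * h⁻¹).toWord = g.toWord ++ r := by
  have hne : k.toWord ≠ [] := mt toWord_eq_nil_iff.mp hk
  set b := k.toWord.head hne
  set z := k.toWord.getLast hne
  set a := g.toWord.getLast?.getD b
  obtain ⟨x, hxa, hxb, hxz⟩ := exists_letter_ne (a.1, !a.2) (b.1, !b.2) z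
  set κ := mk [x] * k * mk [(x.1, !x.2)]
  have hinv : (mk [x])⁻¹ = mk [(x.1, !x.2)] := by rw [inv_mk]; rfl
  refine ⟨g * mk [x], κ.toWord ++ g⁻¹.toWord, ?_⟩
  have hconj : g * mk [x] * k * (g * mk [x])⁻¹ = g * κ * g⁻¹ := by
    simp only [κ, mul_inv_rev, hinv]; group
  rw [hconj, toWord_conj_eq_append (toWord_letter_conj_eq hne ?_ ?_) ?_, List.append_assoc]
  · exact (letter_rel_iff_ne x b).2 fun h => hxb (by simp [h])
  · refine (letter_rel_iff_ne z (x.1, !x.2)).2 fun h => hxz ?_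
    simp only [Prod.ext_iff, Bool.not_inj_iff] at h ⊢
    exact h
  · intro a' ha'
    obtain rfl : a' = a := by simp [a, Option.mem_def.mp ha']
    exact (letter_rel_iff_ne a x).2 hxa

theorem index_ne_zero_of_forall_exists_norm_le [Finite α]
    {P : Subgroup (FreeGroup α)} (N : ℕ) (h : ∀ g, ∃ t, norm t ≤ N ∧ g * t⁻¹ ∈ P) :
    P.index ≠ 0 := by
  have : Finite {L : List (α × Bool) // L.length ≤ N} := (List.finite_length_le _ N).to_subtype
  rw [Subgroup.index_ne_zero_iff_finite]
  refine Finite.of_surjective (fun L : {L : List (α × Bool) // L.length ≤ N} =>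
    (((mk L.1)⁻¹ : FreeGroup α) : FreeGroup α ⧸ P)) ?_
  rintro ⟨g⟩
  obtain ⟨t, ht, htP⟩ := h g⁻¹
  refine ⟨⟨t.toWord, ht⟩, QuotientGroup.eq.mpr ?_⟩
  simpa [mk_toWord] using inv_mem htP

end DecidableEq

theorem index_ne_zero_of_ne_bot [Subsingleton α] {P : Subgroup (FreeGroup α)} (hP : P ≠ ⊥) :
    P.index ≠ 0 := by
  cases isEmpty_or_nonempty α
  · exact Subgroup.index_ne_zero_of_finite
  have : Unique α := uniqueOfSubsingleton (Classical.arbitrary α)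
  rw [← Subgroup.index_map_equiv P mulEquivIntOfUnique,
    ← OrderIso.symm_apply_apply Subgroup.toAddSubgroup' (P.map _)]
  refine (AddSubgroup.index_toSubgroup _).trans_ne (Int.index_ne_zero_of_ne_bot ?_)
  rwa [Ne, map_eq_bot_iff, Subgroup.map_eq_bot_iff_of_injective _ mulEquivIntOfUnique.injective]

theorem index_ne_zero_of_fg_of_normal_le [Finite α] {P K : Subgroup (FreeGroup α)} [K.Normal]
    (hP : P.FG) (hK : K ≠ ⊥) (hKP : K ≤ P) : P.index ≠ 0 := by
  classical
  rcases subsingleton_or_nontrivial α with _ | _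
  · exact index_ne_zero_of_ne_bot (ne_bot_of_le_ne_bot hK hKP)
  obtain ⟨k, hkK, hk⟩ := (Subgroup.bot_or_exists_ne_one K).resolve_left hK
  obtain ⟨S, rfl, hS⟩ := (Subgroup.fg_iff P).mp hP
  obtain ⟨N, hN⟩ := (hS.image norm).bddAbove
  refine index_ne_zero_of_forall_exists_norm_le N fun g => ?_
  obtain ⟨h, r, hr⟩ := exists_toWord_conj_eq_append g hk
  obtain ⟨t, ht, htP⟩ :=
    exists_norm_le_mk_mul_inv_mem_closure (fun s hs => hN ⟨s, hs, rfl⟩)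
      (hKP (Subgroup.Normal.conj_mem ‹_› k hkK h)) _ ⟨r, hr.symm⟩
  exact ⟨t, ht, by rwa [mk_toWord] at htP⟩

end FreeGroup

/-- For a noninjective endomorphism φ of a finitely generated free group, if H·φ⁻¹ is
finitely generated then it has finite index. -/
theorem comap_fg_implies_finiteIndex {n : ℕ}
    (φ : Monoid.End (FreeGroup (Fin n)))
    (hφ : ¬ Function.Injective φ)
    (H : Subgroup (FreeGroup (Fin n)))
    (hfg : (H.comap (φ : FreeGroup (Fin n) →* FreeGroup (Fin n))).FG) :
    (H.comap (φ : FreeGroup (Fin n) →* FreeGroup (Fin n))).index ≠ 0 := by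
  -- instance search does not see through `Monoid.End` to `MonoidHom.normal_ker`
  have := MonoidHom.normal_ker (φ : FreeGroup (Fin n) →* FreeGroup (Fin n))
  exact FreeGroup.index_ne_zero_of_fg_of_normal_le hfg
    (mt (MonoidHom.ker_eq_bot_iff (φ : FreeGroup (Fin n) →* FreeGroup (Fin n))).mp hφ)
    (MonoidHom.ker_le_comap _ H)
end

section
/- Let G be a group and φ an endomorphism of G. If there exists a constant C such that every eventually fixed point x satisfies x·φ^C ∈ Fix(φ), then EvFix(φ) equals the join of Ker(φ^C) and Fix(φ), and Fix(φ) is isomorphic to the quotient EvFix(φ)/Ker(φ^C) (noting Ker(φ^C) ∩ EvFix(φ) is normal in EvFix(φ)). -/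
/-!
Write `ψ = φ ^ C`. Fixed points of `φ` are eventually fixed, and so is the kernel of `ψ`, since
`φ (ψ x) = ψ x = 1` for `x ∈ ker ψ`. The hypothesis says that `ψ` maps `EvFix(φ)` into `Fix(φ)`,
and `ψ` fixes `Fix(φ)` pointwise, so `ψ` restricts to a retraction of `EvFix(φ)` onto `Fix(φ)`.
Every retraction `ψ : H → K ≤ H` gives `H = ker ψ ⊔ K`, via `x = (x (ψ x)⁻¹) (ψ x)`, and
`H ⧸ ker ψ ≅ K` by the first isomorphism theorem.
-/

namespace MonoidHom

variable {G : Type*} [Group G] (f : G →* G) {H K : Subgroup G}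

theorem eq_ker_sup_of_retract (hKH : K ≤ H) (hker : f.ker ≤ H) (hmaps : ∀ x ∈ H, f x ∈ K)
    (hfix : ∀ y ∈ K, f y = y) : H = f.ker ⊔ K := by
  refine le_antisymm (fun x hx => ?_) (sup_le hker hKH)
  have hx_ker : x * (f x)⁻¹ ∈ f.ker := by
    rw [mem_ker, map_mul, map_inv, hfix _ (hmaps x hx), mul_inv_cancel]
  simpa using mul_mem (Subgroup.mem_sup_left hx_ker) (Subgroup.mem_sup_right (hmaps x hx))

def domCodRestrict (hmaps : ∀ x ∈ H, f x ∈ K) : H →* K :=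
  (f.domRestrict H).codRestrict K fun x => hmaps x x.2

theorem domCodRestrict_surjective (hKH : K ≤ H) (hmaps : ∀ x ∈ H, f x ∈ K)
    (hfix : ∀ y ∈ K, f y = y) : Function.Surjective (f.domCodRestrict hmaps) :=
  fun y => ⟨⟨y, hKH y.2⟩, Subtype.ext (hfix y y.2)⟩

theorem ker_domCodRestrict (hmaps : ∀ x ∈ H, f x ∈ K) :
    (f.domCodRestrict hmaps).ker = f.ker.subgroupOf H :=
  (ker_codRestrict _ _ _).trans (ker_domRestrict H f)

noncomputable def quotientKerSubgroupOfEquivOfRetract (hKH : K ≤ H) (hmaps : ∀ x ∈ H, f x ∈ K)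
    (hfix : ∀ y ∈ K, f y = y) : H ⧸ f.ker.subgroupOf H ≃* K :=
  (QuotientGroup.quotientMulEquivOfEq (f.ker_domCodRestrict hmaps).symm).trans
    (QuotientGroup.quotientKerEquivOfSurjective _ (f.domCodRestrict_surjective hKH hmaps hfix))

end MonoidHom

/-- If every eventually fixed point reaches Fix(φ) after C steps, then
EvFix(φ) = Ker(φ^C) ⊔ Fix(φ), Ker(φ^C) ∩ EvFix(φ) is normal in EvFix(φ), and
Fix(φ) ≅ EvFix(φ)/Ker(φ^C). -/
theorem evFix_eq_ker_join_fix {G : Type*} [Group G] (φ : Monoid.End G) (C : ℕ)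
    (E Fx : Subgroup G)
    (hE : ∀ x, x ∈ E ↔ ∃ m : ℕ, (φ ^ (m + 1)) x = (φ ^ m) x)
    (hFx : ∀ x, x ∈ Fx ↔ φ x = x)
    (hC : ∀ x, x ∈ E → (φ ^ C) x ∈ Fx) :
    E = MonoidHom.ker (φ ^ C : G →* G) ⊔ Fx ∧
      ∃ hN : ((MonoidHom.ker (φ ^ C : G →* G)).subgroupOf E).Normal,
        letI := hN
        Nonempty ((E ⧸ (MonoidHom.ker (φ ^ C : G →* G)).subgroupOf E) ≃* Fx) := by
  have hfix : ∀ y ∈ Fx, (φ ^ C) y = y := fun y hy => by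
    rw [Monoid.End.coe_pow, Function.iterate_fixed ((hFx y).1 hy)]
  have hFxE : Fx ≤ E := fun y hy => (hE y).2 ⟨0, by simpa using (hFx y).1 hy⟩
  have hkerE : MonoidHom.ker (φ ^ C : G →* G) ≤ E := fun x (hx : (φ ^ C) x = 1) =>
    (hE x).2 ⟨C, by rw [pow_succ', Monoid.End.coe_mul, Function.comp_apply, hx, map_one]⟩
  exact ⟨(φ ^ C : G →* G).eq_ker_sup_of_retract hFxE hkerE hC hfix, inferInstance,
    ⟨(φ ^ C : G →* G).quotientKerSubgroupOfEquivOfRetract hFxE hC hfix⟩⟩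
end

section
/- Let G be a group, φ an endomorphism of G, and suppose every finite orbit under φ has cardinality at most k. Then for m > k, Ker(φ^m) = Ker(φ^k); i.e., the ascending chain of kernels Ker(φ) ⊆ Ker(φ²) ⊆ … stabilizes at step k. -/
/-!
If `φ^m x = 1`, the orbit of `x` is finite, so by hypothesis it has at most `k` points and
pigeonhole among `x, φ x, …, φ^k x` makes `φ^k x` a periodic point. A periodic point that is
eventually sent to the fixed point `1` already equals `1`, because it returns to itself
after a multiple of its period.
-/

namespace Function

variable {α : Type*} {f : α → α} {x a : α}

theorem IsFixedPt.iterate_eq_of_le (ha : IsFixedPt f a) {m n : ℕ} (h : f^[m] x = a)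
    (hmn : m ≤ n) : f^[n] x = a := by
  rw [← Nat.sub_add_cancel hmn, iterate_add_apply, h, (ha.iterate _).eq]

theorem IsFixedPt.finite_range_iterate (ha : IsFixedPt f a) {m : ℕ} (h : f^[m] x = a) :
    (Set.range fun n => f^[n] x).Finite := by
  refine ((Set.finite_Iic m).image fun n => f^[n] x).subset ?_
  rintro _ ⟨n, rfl⟩
  rcases le_total n m with hnm | hmn
  · exact ⟨n, hnm, rfl⟩
  · exact ⟨m, Set.mem_Iic.2 le_rfl, h.trans (ha.iterate_eq_of_le h hmn).symm⟩

theorem IsFixedPt.eq_of_mem_periodicPts (ha : IsFixedPt f a) {y : α} (hy : y ∈ periodicPts f)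
    {n : ℕ} (h : f^[n] y = a) : y = a := by
  obtain ⟨p, hp, hper⟩ := mem_periodicPts.1 hy
  calc y = f^[p * n] y := (hper.mul_const n).symm
    _ = a := ha.iterate_eq_of_le h (Nat.le_mul_of_pos_left n hp)

theorem iterate_mem_periodicPts_of_ncard_range_le {k : ℕ}
    (hfin : (Set.range fun n => f^[n] x).Finite)
    (hk : (Set.range fun n => f^[n] x).ncard ≤ k) : f^[k] x ∈ periodicPts f := by
  have hlt : (Set.range fun n => f^[n] x).ncard < (Set.Iic k).ncard := by
    rw [Set.ncard_eq_toFinset_card' (Set.Iic k)]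
    simpa using Nat.lt_succ_of_le hk
  obtain ⟨i, hi, j, hj, hij, heq⟩ :=
    Set.exists_ne_map_eq_of_ncard_lt_of_maps_to hlt (fun n _ => Set.mem_range_self n) hfin
  wlog hlt : i < j generalizing i j
  · exact this j hj i hi hij.symm heq.symm (lt_of_le_of_ne (not_lt.1 hlt) hij.symm)
  have hper : IsPeriodicPt f (j - i) (f^[i] x) := by
    rw [IsPeriodicPt, IsFixedPt, ← iterate_add_apply, Nat.sub_add_cancel hlt.le, heq]
  rw [← Nat.sub_add_cancel (Set.mem_Iic.1 hi), iterate_add_apply]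
  exact mk_mem_periodicPts (Nat.sub_pos_of_lt hlt) (hper.apply_iterate _)

theorem IsFixedPt.iterate_eq_iff_of_ncard_range_le (ha : IsFixedPt f a) {k m : ℕ}
    (hk : ∀ x, (Set.range fun n => f^[n] x).Finite → (Set.range fun n => f^[n] x).ncard ≤ k)
    (hkm : k ≤ m) : f^[m] x = a ↔ f^[k] x = a := by
  refine ⟨fun h => ?_, fun h => ha.iterate_eq_of_le h hkm⟩
  have hfin := ha.finite_range_iterate h
  refine ha.eq_of_mem_periodicPts (iterate_mem_periodicPts_of_ncard_range_le hfin (hk x hfin))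
    (n := m - k) ?_
  rwa [← iterate_add_apply, Nat.sub_add_cancel hkm]

end Function

/-- If every finite orbit under φ has at most k elements, then the ascending chain of
kernels stabilizes at step k: Ker(φ^m) = Ker(φ^k) for all m > k. -/
theorem ker_chain_stabilizes {G : Type*} [Group G] (φ : Monoid.End G) (k : ℕ)
    (hk : ∀ x : G, ({y : G | ∃ j : ℕ, (φ ^ j) x = y}).Finite →
      ({y : G | ∃ j : ℕ, (φ ^ j) x = y}).ncard ≤ k) :
    ∀ m : ℕ, k < m →
      MonoidHom.ker (φ ^ m : G →* G) = MonoidHom.ker (φ ^ k : G →* G) := by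
  intro m hm
  ext x
  exact Function.IsFixedPt.iterate_eq_iff_of_ncard_range_le (map_one φ) hk hm.le
end

section
/- Let φ: F₂ → F₂ be the endomorphism of the free group on {a,b} defined by a ↦ aba and b ↦ 1. Then Fix(φ) is trivial and EvFix(φ) = Ker(φ), which is the (infinitely generated) normal subgroup of words with zero exponent sum in a. -/
/-!
Writing `λ` for `lamA`, `φ x = (aba) ^ λ(x)` and `λ(aba) = 2`, so `λ ∘ φ = 2λ`. A fixed point `x`
thus has `λ(x) = 0`, whence `x = φ x = 1`; if `φ^m x` is fixed then it is `1`, so `2^m λ(x) = 0`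
and `φ x = 1`; and `ker φ = ker λ`.

The kernel is not finitely generated: under the map `F₂ → (⊕_ℤ ℤ) ⋊ ℤ` sending `a` to the
generator of `ℤ` (acting by translation) and `b` to `δ₀`, it lands in the base `⊕_ℤ ℤ` and its
image contains every `δ_k`, the image of `a^k b a^{-k}`; but finitely many elements of `⊕_ℤ ℤ`
are all supported in one finite set.
-/

open Multiplicative SemidirectProduct

namespace Monoid.End

variable {G : Type*} [Group G] {f : Monoid.End G} {ℓ : G →* Multiplicative ℤ} {c : G} {d : ℤ}

lemma toAdd_map_apply (hf : ∀ x, f x = c ^ (ℓ x).toAdd) (hc : ℓ c = ofAdd d) (x : G) :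
    (ℓ (f x)).toAdd = d * (ℓ x).toAdd := by
  rw [hf, map_zpow, hc, toAdd_zpow, toAdd_ofAdd, smul_eq_mul, mul_comm]

lemma toAdd_map_pow_apply (hf : ∀ x, f x = c ^ (ℓ x).toAdd) (hc : ℓ c = ofAdd d) (m : ℕ)
    (x : G) : (ℓ ((f ^ m) x)).toAdd = d ^ m * (ℓ x).toAdd := by
  induction m with
  | zero => simp
  | succ m ih =>
    rw [pow_succ', coe_mul, Function.comp_apply, toAdd_map_apply hf hc, ih, pow_succ', mul_assoc]

lemma apply_eq_one_iff (hf : ∀ x, f x = c ^ (ℓ x).toAdd) (hc : ℓ c = ofAdd d) (hd : d ≠ 0)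
    (x : G) : f x = 1 ↔ ℓ x = 1 := by
  refine ⟨fun h => ?_, fun h => by rw [hf, h, toAdd_one, zpow_zero]⟩
  have h0 : d * (ℓ x).toAdd = 0 := by rw [← toAdd_map_apply hf hc, h, map_one, toAdd_one]
  simpa [hd] using h0

lemma apply_eq_self_iff (hf : ∀ x, f x = c ^ (ℓ x).toAdd) (hc : ℓ c = ofAdd d) (hd : d ≠ 1)
    (x : G) : f x = x ↔ x = 1 := by
  refine ⟨fun h => ?_, fun h => by rw [h, map_one]⟩
  have hℓ : ℓ x = 1 := by
    have h1 : d * (ℓ x).toAdd = (ℓ x).toAdd := by rw [← toAdd_map_apply hf hc, h]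
    simpa [mul_left_eq_self₀, hd] using h1
  rw [← h, hf, hℓ, toAdd_one, zpow_zero]

lemma exists_pow_succ_apply_eq_iff (hf : ∀ x, f x = c ^ (ℓ x).toAdd) (hc : ℓ c = ofAdd d)
    (hd₀ : d ≠ 0) (hd₁ : d ≠ 1) (x : G) :
    (∃ m : ℕ, (f ^ (m + 1)) x = (f ^ m) x) ↔ f x = 1 := by
  refine ⟨fun ⟨m, hm⟩ => ?_, fun h => ⟨1, by simp [pow_succ, h]⟩⟩
  have hfix : (f ^ m) x = 1 :=
    (apply_eq_self_iff hf hc hd₁ _).1 (by rwa [pow_succ', coe_mul, Function.comp_apply] at hm)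
  have h0 : d ^ m * (ℓ x).toAdd = 0 := by rw [← toAdd_map_pow_apply hf hc, hfix, map_one, toAdd_one]
  rw [apply_eq_one_iff hf hc hd₀]
  simpa [hd₀] using h0

end Monoid.End

theorem Finsupp.not_fg_of_forall_exists_apply_ne_zero {ι M : Type*} [Infinite ι] [AddCommGroup M]
    {H : AddSubgroup (ι →₀ M)} (h : ∀ k, ∃ f ∈ H, f k ≠ 0) : ¬ H.FG := by
  classical
  rintro ⟨S, rfl⟩
  have hle : AddSubgroup.closure (S : Set (ι →₀ M)) ≤
      (Finsupp.supported M ℤ (S.biUnion Finsupp.support : Set ι)).toAddSubgroup :=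
    (AddSubgroup.closure_le _).2 fun f hf => (Finsupp.mem_supported ℤ f).2 <|
      Finset.coe_subset.2 (Finset.subset_biUnion_of_mem _ hf)
  obtain ⟨k, hk⟩ := Infinite.exists_notMem_finset (S.biUnion Finsupp.support)
  obtain ⟨f, hf, hfk⟩ := h k
  exact hk <| (Finsupp.mem_supported ℤ f).1 (hle hf) (Finsupp.mem_support_iff.2 hfk)

namespace Stmt16

def a : FreeGroup (Fin 2) := FreeGroup.of 0
def b : FreeGroup (Fin 2) := FreeGroup.of 1

/-- a ↦ aba, b ↦ 1 -/
def φ : Monoid.End (FreeGroup (Fin 2)) :=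
  FreeGroup.lift (fun i => if i = 0 then a * b * a else 1)

/-- exponent sum in a, written multiplicatively -/
def lamA : FreeGroup (Fin 2) →* Multiplicative ℤ :=
  FreeGroup.lift (fun i => if i = 0 then Multiplicative.ofAdd (1 : ℤ) else 1)

lemma φ_apply (x : FreeGroup (Fin 2)) : φ x = (a * b * a) ^ (lamA x).toAdd := by
  have h : (φ : FreeGroup (Fin 2) →* FreeGroup (Fin 2)) = (zpowersHom _ (a * b * a)).comp lamA := by
    refine FreeGroup.ext_hom _ _ fun i => ?_
    fin_cases i <;> simp [φ, lamA]
  exact DFunLike.congr_fun h x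

lemma lamA_aba : lamA (a * b * a) = ofAdd 2 := by
  simp [lamA, a, b, ← ofAdd_add]

lemma φ_eq_one_iff (x : FreeGroup (Fin 2)) : φ x = 1 ↔ lamA x = 1 :=
  Monoid.End.apply_eq_one_iff φ_apply lamA_aba two_ne_zero x

lemma ker_φ : MonoidHom.ker (φ : FreeGroup (Fin 2) →* FreeGroup (Fin 2)) = lamA.ker := by
  ext x
  exact φ_eq_one_iff x

noncomputable def shift : Multiplicative ℤ →* MulAut (Multiplicative (ℤ →₀ ℤ)) where
  toFun n := (Finsupp.domCongr (Equiv.addRight n.toAdd)).toMultiplicative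
  map_one' := by ext f k; simp [-Equiv.addRight_zero]
  map_mul' m n := by ext f k; simp [-Equiv.addRight_add, add_assoc, add_comm]

lemma shift_single (n j v : ℤ) :
    shift (ofAdd n) (ofAdd (Finsupp.single j v)) = ofAdd (Finsupp.single (j + n) v) := by
  simp [shift]

noncomputable def ρ : FreeGroup (Fin 2) →* Multiplicative (ℤ →₀ ℤ) ⋊[shift] Multiplicative ℤ :=
  FreeGroup.lift fun i => if i = 0 then inr (ofAdd 1) else inl (ofAdd (Finsupp.single 0 1))

lemma rightHom_comp_ρ : rightHom.comp ρ = lamA :=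
  FreeGroup.ext_hom _ _ fun i => by fin_cases i <;> simp [ρ, lamA]

lemma ρ_conj_b (k : ℤ) : ρ (a ^ k * b * (a ^ k)⁻¹) = inl (ofAdd (Finsupp.single k 1)) := by
  have ha : ρ (a ^ k) = inr (ofAdd k) := by
    rw [map_zpow, show ρ a = inr (ofAdd 1) by simp [ρ, a], ← map_zpow, ← ofAdd_zsmul, zsmul_one]
    rfl
  have hb : ρ b = inl (ofAdd (Finsupp.single 0 1)) := by simp [ρ, b]
  rw [map_mul, map_mul, map_inv, ha, hb, ← map_inv, ← inl_aut, shift_single, zero_add]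

lemma ρ_mem_range_inl {x : FreeGroup (Fin 2)} (hx : x ∈ lamA.ker) : ρ x ∈ (inl : _ →* _).range := by
  rw [range_inl_eq_ker_rightHom, MonoidHom.mem_ker, ← MonoidHom.comp_apply, rightHom_comp_ρ]
  exact hx

noncomputable def kerToBase : lamA.ker →* Multiplicative (ℤ →₀ ℤ) :=
  (MonoidHom.ofInjective inl_injective).symm.toMonoidHom.comp
    ((ρ.comp lamA.ker.subtype).codRestrict _ fun x => ρ_mem_range_inl x.2)

lemma kerToBase_apply (x : lamA.ker) : inl (kerToBase x) = ρ x := by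
  rw [← MonoidHom.ofInjective_apply inl_injective]
  simp [kerToBase]

lemma single_mem_range_kerToBase (k : ℤ) : ofAdd (Finsupp.single k 1) ∈ kerToBase.range := by
  have hx : a ^ k * b * (a ^ k)⁻¹ ∈ lamA.ker := by simp [lamA, a, b]
  refine ⟨⟨_, hx⟩, inl_injective (φ := shift) ?_⟩
  rw [kerToBase_apply, ρ_conj_b]

theorem not_fg_ker_lamA : ¬ lamA.ker.FG := by
  intro hfg
  have : Group.FG lamA.ker := (Group.fg_iff_subgroup_fg _).2 hfg
  have hrange : kerToBase.range.FG := (Group.fg_iff_subgroup_fg _).1 inferInstance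
  refine Finsupp.not_fg_of_forall_exists_apply_ne_zero
    (H := AddSubgroup.toSubgroup.symm kerToBase.range)
    (fun k => ⟨Finsupp.single k 1, single_mem_range_kerToBase k, by simp⟩)
    ((AddSubgroup.fg_iff_mul_fg _).2 (by simpa using hrange))

/-- For a ↦ aba, b ↦ 1: Fix(φ) is trivial, EvFix(φ) = Ker(φ) is the normal subgroup of
words with zero exponent sum in a, and it is not finitely generated. -/
theorem fix_trivial_evFix_eq_ker :
    (∀ x, φ x = x ↔ x = 1) ∧
      (∀ x, (∃ m : ℕ, (φ ^ (m + 1)) x = (φ ^ m) x) ↔ φ x = 1) ∧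
      (∀ x, φ x = 1 ↔ lamA x = 1) ∧
      (MonoidHom.ker (φ : FreeGroup (Fin 2) →* FreeGroup (Fin 2))).Normal ∧
      ¬ (MonoidHom.ker (φ : FreeGroup (Fin 2) →* FreeGroup (Fin 2))).FG :=
  ⟨Monoid.End.apply_eq_self_iff φ_apply lamA_aba (by norm_num),
    Monoid.End.exists_pow_succ_apply_eq_iff φ_apply lamA_aba two_ne_zero (by norm_num),
    φ_eq_one_iff, MonoidHom.normal_ker _, ker_φ ▸ not_fg_ker_lamA⟩

end Stmt16
end
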